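/- arXiv:1411.0301 — 3 statements merged into one kernel-verified Lean document; each statement's English description precedes it below -/
import Mathlib

section
/- The function u^m(t) := Σ_{k ∈ ℤ} G_{m−k}(2t/h²) u₀(kh) solves the semi-discrete heat equation d/dt u^m(t) = (1/h²)[u^{m+1}(t) + u^{m−1}(t) − 2u^m(t)] with initial data u^m(0) = u₀(mh), for bounded initial data u₀ ∈ L^∞(ℝ). -/
open Real

/-- Modified Bessel function of the first kind of nonnegative integer order. -/
noncomputable def besselI (n : ℕ) (α : ℝ) : ℝ :=
  ∑' m : ℕ, (α/2)^(2*m+n) / (Nat.factorial m * Nat.factorial (m+n))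

/-- Discrete heat kernel. -/
noncomputable def G (k : ℤ) (α : ℝ) : ℝ := Real.exp (-α) * besselI k.natAbs α

/-!
Differentiating the power series of `I_n` termwise, and splitting the factor `2m + n` of the
`m`-th derivative term as `m + (m + n)`, gives the recurrence `I_n' = (I_{n+1} + I_{n-1}) / 2`,
where `I_{-1} = I_1`; hence `G_k' = (G_{k+1} + G_{k-1}) / 2 - G_k`. On `[0, A]` the kernel is
dominated by `(A/2)^|k| e^{A²/4} / |k|!`, which is summable over `ℤ`, so the convolution with
bounded data may also be differentiated termwise; the chain rule for `α = 2t/h²` then gives the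
semi-discrete heat equation. At `α = 0` only `G_0 = 1` survives, which is the initial condition.
-/

open Nat

noncomputable def besselTerm (n m : ℕ) (α : ℝ) : ℝ := (α/2)^(2*m+n) / (m ! * (m+n)!)

noncomputable def besselTermDeriv (n m : ℕ) (α : ℝ) : ℝ :=
  (2*m+n : ℕ) * (α/2)^(2*m+n-1) / (2 * (m ! * (m+n)!))

lemma besselI_eq_tsum (n : ℕ) : besselI n = fun α => ∑' m, besselTerm n m α := rfl

lemma besselTerm_nonneg (n m : ℕ) {α : ℝ} (hα : 0 ≤ α) : 0 ≤ besselTerm n m α := by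
  unfold besselTerm; positivity

lemma abs_besselTerm (n m : ℕ) (α : ℝ) : |besselTerm n m α| = besselTerm n m |α| := by
  simp [besselTerm, abs_div, abs_pow]

lemma besselTerm_le (n m : ℕ) {α A : ℝ} (hα : 0 ≤ α) (hαA : α ≤ A) :
    besselTerm n m α ≤ (A/2)^n / n ! * ((A^2/4)^m / m !) := by
  have hpow : (α/2)^(2*m+n) ≤ (A/2)^n * (A^2/4)^m := calc
    (α/2)^(2*m+n) ≤ (A/2)^(2*m+n) := by gcongr
    _ = (A/2)^n * (A^2/4)^m := by rw [pow_add, pow_mul]; ring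
  calc besselTerm n m α ≤ (A/2)^n * (A^2/4)^m / (m ! * n !) := by
        have hA : 0 ≤ A := hα.trans hαA
        have hfact : (n ! : ℝ) ≤ (m+n)! := by
          exact_mod_cast Nat.factorial_le (Nat.le_add_left n m)
        unfold besselTerm
        gcongr
    _ = _ := by ring

lemma summable_besselTerm (n : ℕ) (α : ℝ) : Summable (fun m => besselTerm n m α) :=
  .of_norm_bounded ((Real.summable_pow_div_factorial _).mul_left _) fun m => by
    rw [norm_eq_abs, abs_besselTerm]
    exact besselTerm_le n m (abs_nonneg α) le_rfl

lemma besselI_nonneg (n : ℕ) {α : ℝ} (hα : 0 ≤ α) : 0 ≤ besselI n α :=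
  tsum_nonneg fun m => besselTerm_nonneg n m hα

lemma besselI_le (n : ℕ) {α A : ℝ} (hα : 0 ≤ α) (hαA : α ≤ A) :
    besselI n α ≤ (A/2)^n / n ! * exp (A^2/4) := by
  have hexp := (NormedSpace.expSeries_div_hasSum_exp (A^2/4)).mul_left ((A/2)^n / n !)
  rw [← Real.exp_eq_exp_ℝ] at hexp
  exact hasSum_le (fun m => besselTerm_le n m hα hαA) (summable_besselTerm n α).hasSum hexp

lemma besselI_zero_right (n : ℕ) : besselI n 0 = if n = 0 then 1 else 0 := by
  rw [besselI, tsum_eq_single 0]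
  · cases n <;> simp
  · intro m hm
    simp [hm]

lemma hasDerivAt_besselTerm (n m : ℕ) (α : ℝ) :
    HasDerivAt (besselTerm n m) (besselTermDeriv n m α) α := by
  refine ((((hasDerivAt_id' α).div_const 2).fun_pow (2*m+n)).div_const
    ((m ! * (m+n)! : ℝ))).congr_deriv ?_
  unfold besselTermDeriv
  ring

lemma abs_besselTermDeriv_le (n m : ℕ) {α A : ℝ} (hαA : |α| ≤ A) :
    |besselTermDeriv n m α| ≤ besselTermDeriv n m A := by
  have hA : 0 ≤ A := (abs_nonneg α).trans hαA
  simp only [besselTermDeriv, abs_div, abs_mul, abs_pow, Nat.abs_cast, abs_two]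
  gcongr

lemma hasSum_besselI_succ (n : ℕ) (α : ℝ) :
    HasSum (fun m : ℕ => (m : ℝ) * (α/2)^(2*m+n-1) / (m ! * (m+n)!)) (besselI (n+1) α) := by
  rw [← hasSum_nat_add_iff' 1]
  simp only [Finset.range_one, Finset.sum_singleton, CharP.cast_eq_zero, zero_mul, zero_div,
    sub_zero]
  refine (summable_besselTerm (n+1) α).hasSum.congr_fun fun m => ?_
  rw [show 2*(m+1)+n-1 = 2*m+(n+1) by omega, show m+1+n = m+(n+1) by omega, Nat.factorial_succ,
    besselTerm]
  push_cast
  field_simp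

lemma hasSum_besselI_natAbs_sub_one (n : ℕ) (α : ℝ) :
    HasSum (fun m : ℕ => ((m+n : ℕ) : ℝ) * (α/2)^(2*m+n-1) / (m ! * (m+n)!))
      (besselI ((n:ℤ)-1).natAbs α) := by
  rcases n with _ | n
  · simpa using hasSum_besselI_succ 0 α
  rw [show (((n+1 : ℕ) : ℤ) - 1).natAbs = n by omega]
  refine (summable_besselTerm n α).hasSum.congr_fun fun m => ?_
  rw [show 2*m+(n+1)-1 = 2*m+n by omega, ← add_assoc, Nat.factorial_succ, besselTerm]
  push_cast
  field_simp

lemma hasSum_besselTermDeriv (n : ℕ) (α : ℝ) :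
    HasSum (fun m => besselTermDeriv n m α)
      ((besselI (n+1) α + besselI ((n:ℤ)-1).natAbs α) / 2) := by
  refine ((hasSum_besselI_succ n α).add (hasSum_besselI_natAbs_sub_one n α)).div_const 2
    |>.congr_fun fun m => ?_
  unfold besselTermDeriv
  push_cast
  ring

lemma hasDerivAt_besselI (n : ℕ) (α : ℝ) :
    HasDerivAt (besselI n) ((besselI (n+1) α + besselI ((n:ℤ)-1).natAbs α) / 2) α := by
  set A := |α| + 1
  have hα : α ∈ Set.Ioo (-A) A := abs_lt.mp (lt_add_one _)
  rw [← (hasSum_besselTermDeriv n α).tsum_eq, besselI_eq_tsum]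
  exact hasDerivAt_tsum_of_isPreconnected (hasSum_besselTermDeriv n A).summable isOpen_Ioo
    (convex_Ioo _ _).isPreconnected (fun m y _ => hasDerivAt_besselTerm n m y)
    (fun m y hy => abs_besselTermDeriv_le n m (abs_lt.mpr hy).le) hα (summable_besselTerm n α) hα

lemma natAbs_neighbours_add {M : Type*} [AddCommMagma M] (f : ℕ → M) (k : ℤ) :
    f (k.natAbs + 1) + f ((k.natAbs : ℤ) - 1).natAbs = f (k+1).natAbs + f (k-1).natAbs := by
  rcases le_or_gt 0 k with hk | hk
  · rw [show k.natAbs + 1 = (k+1).natAbs by omega,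
      show ((k.natAbs : ℤ) - 1).natAbs = (k-1).natAbs by omega]
  · rw [show k.natAbs + 1 = (k-1).natAbs by omega,
      show ((k.natAbs : ℤ) - 1).natAbs = (k+1).natAbs by omega, add_comm]

lemma hasDerivAt_G (k : ℤ) (α : ℝ) :
    HasDerivAt (G k) ((G (k+1) α + G (k-1) α) / 2 - G k α) α := by
  refine ((hasDerivAt_neg α).exp.mul (hasDerivAt_besselI k.natAbs α)).congr_deriv ?_
  rw [natAbs_neighbours_add (besselI · α), G, G, G]
  ring

lemma G_nonneg (k : ℤ) {α : ℝ} (hα : 0 ≤ α) : 0 ≤ G k α :=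
  mul_nonneg (exp_nonneg _) (besselI_nonneg _ hα)

lemma G_zero_right (k : ℤ) : G k 0 = if k = 0 then 1 else 0 := by
  simp [G, besselI_zero_right]

noncomputable def heatKernelBound (A : ℝ) (k : ℤ) : ℝ :=
  (A/2)^k.natAbs / k.natAbs ! * exp (A^2/4)

lemma G_le_heatKernelBound (k : ℤ) {α A : ℝ} (hα : 0 ≤ α) (hαA : α ≤ A) :
    G k α ≤ heatKernelBound A k := calc
  G k α ≤ besselI k.natAbs α :=
    mul_le_of_le_one_left (besselI_nonneg _ hα) (exp_le_one_iff.mpr (neg_nonpos.mpr hα))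
  _ ≤ heatKernelBound A k := besselI_le _ hα hαA

lemma summable_heatKernelBound (A : ℝ) : Summable (heatKernelBound A) := by
  have h := (Real.summable_pow_div_factorial (A/2)).mul_right (exp (A^2/4))
  exact summable_int_iff_summable_nat_and_neg.mpr ⟨h, by simpa [heatKernelBound] using h⟩

noncomputable def discreteHeat (c : ℤ → ℝ) (m : ℤ) (α : ℝ) : ℝ :=
  ∑' k, G (m - k) α * c k

lemma discreteHeat_zero_right (c : ℤ → ℝ) (m : ℤ) : discreteHeat c m 0 = c m := by
  simp [discreteHeat, G_zero_right, sub_eq_zero]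

lemma summable_G_sub_mul {c : ℤ → ℝ} {M : ℝ} (hc : ∀ k, |c k| ≤ M) (m : ℤ) {α : ℝ}
    (hα : 0 ≤ α) : Summable (fun k => G (m - k) α * c k) := by
  refine .of_norm_bounded (((Equiv.subLeft m).summable_iff.mpr
    (summable_heatKernelBound α)).mul_right M) fun k => ?_
  rw [norm_mul, norm_of_nonneg (G_nonneg _ hα)]
  exact mul_le_mul (G_le_heatKernelBound _ hα le_rfl) (hc k) (norm_nonneg _)
    ((G_nonneg _ hα).trans (G_le_heatKernelBound _ hα le_rfl))

lemma hasDerivAt_discreteHeat {c : ℤ → ℝ} {M : ℝ} (hc : ∀ k, |c k| ≤ M) (m : ℤ) {α : ℝ}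
    (hα : 0 < α) :
    HasDerivAt (discreteHeat c m)
      ((discreteHeat c (m+1) α + discreteHeat c (m-1) α) / 2 - discreteHeat c m α) α := by
  set A := α + 1
  have hαA : α ∈ Set.Ioo 0 A := ⟨hα, lt_add_one α⟩
  set B := heatKernelBound A
  have hB (j : ℤ) : Summable (fun k => B (j - k)) :=
    (Equiv.subLeft j).summable_iff.mpr (summable_heatKernelBound A)
  have hsum (j : ℤ) : HasSum (fun k => G (j - k) α * c k) (discreteHeat c j α) :=
    (summable_G_sub_mul hc j hα.le).hasSum
  refine (hasDerivAt_tsum_of_isPreconnected (g := fun k y => G (m - k) y * c k)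
    (g' := fun k y => ((G (m+1-k) y + G (m-1-k) y) / 2 - G (m-k) y) * c k)
    ((((hB (m+1)).add (hB (m-1))).add (hB m)).mul_right M) isOpen_Ioo
    (convex_Ioo 0 A).isPreconnected (fun k y _ => ?_) (fun k y hy => ?_) hαA
    (summable_G_sub_mul hc m hα.le) hαA).congr_deriv ?_
  · have h := (hasDerivAt_G (m - k) y).mul_const (c k)
    rwa [sub_add_eq_add_sub, sub_right_comm] at h
  · obtain ⟨hy0, hyA⟩ := hy
    have hG (j : ℤ) : 0 ≤ G j y ∧ G j y ≤ B j :=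
      ⟨G_nonneg j hy0.le, G_le_heatKernelBound j hy0.le hyA.le⟩
    obtain ⟨h₁, h₁'⟩ := hG (m+1-k)
    obtain ⟨h₂, h₂'⟩ := hG (m-1-k)
    obtain ⟨h₃, h₃'⟩ := hG (m-k)
    rw [norm_mul, Real.norm_eq_abs]
    exact mul_le_mul (abs_le.mpr ⟨by linarith, by linarith⟩) (hc k) (abs_nonneg _)
      (by linarith)
  · refine HasSum.tsum_eq ?_
    refine (((hsum (m+1)).add (hsum (m-1))).div_const 2 |>.sub (hsum m)).congr_fun fun k => ?_
    ring

/-- The convolution of the discrete heat kernel with the initial data solves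
the semi-discrete heat equation. -/
theorem semidiscrete_heat_solution (h : ℝ) (hh : 0 < h) (u₀ : ℝ → ℝ)
    (hb : ∃ M, ∀ x, |u₀ x| ≤ M) :
    (∀ m : ℤ, (fun t : ℝ => ∑' k : ℤ, G (m - k) (2*t/h^2) * u₀ (k*h)) 0 = u₀ (m*h)) ∧
    (∀ m : ℤ, ∀ t : ℝ, 0 < t →
      HasDerivAt (fun t : ℝ => ∑' k : ℤ, G (m - k) (2*t/h^2) * u₀ (k*h))
        ((1/h^2) * ((∑' k : ℤ, G (m+1 - k) (2*t/h^2) * u₀ (k*h))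
          + (∑' k : ℤ, G (m-1 - k) (2*t/h^2) * u₀ (k*h))
          - 2 * ∑' k : ℤ, G (m - k) (2*t/h^2) * u₀ (k*h))) t) := by
  obtain ⟨M, hM⟩ := hb
  refine ⟨fun m => by simpa [discreteHeat] using discreteHeat_zero_right (u₀ <| · * h) m,
    fun m t ht => ?_⟩
  have hscale : HasDerivAt (fun t : ℝ => 2*t/h^2) (2/h^2) t := by
    simpa using ((hasDerivAt_id t).const_mul 2).div_const (h^2)
  have hα : 0 < 2*t/h^2 := by positivity
  refine ((hasDerivAt_discreteHeat (fun k => hM _) m hα).comp t hscale).congr_deriv ?_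
  simp only [discreteHeat]
  ring
end

section
/- Let μ > 0, suppose τ ≤ μh, and set α = 2τ/h². Then Σ_{k = ⌈3μ/h⌉}^∞ G_k(α) ≤ (1/√(6πμ/h)) (eτ/(3μh))^{3μ/h}; in particular this sum is o((e/3)^{μ/h}) as h → 0. -/
/-!
With `x = α / 2`, the Bessel series is `I_n(2x) = ∑ₘ (xᵐ/m!) (x^(m+n)/(m+n)!)`. Summing
over `n ≥ K` and reindexing by `i = m + n ≥ K`, the tail of the heat kernel is at most
`e^{-2x} · eˣ · ∑_{i ≥ K} xⁱ/i!`, and `(K + j)! ≥ K! j!` bounds the last sum by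
`(x^K/K!) eˣ`. Hence the tail is at most `x^K/K!`, which Stirling's lower bound for `K!` turns into
`(2πK)^{-1/2} (e x/K)^K`; this decreases in `K` as long as `e x ≤ K`, so `K = ⌈3μ/h⌉` may be
replaced by `3μ/h`, and `e x ≤ 3μ/h` is where `τ ≤ μ h` and `e ≤ 3` enter.
-/

open Real

open scoped Nat

lemma ENNReal.ofReal_tsum_le_tsum_ofReal {α : Type*} {f : α → ℝ} (hf : ∀ a, 0 ≤ f a) :
    ENNReal.ofReal (∑' a, f a) ≤ ∑' a, ENNReal.ofReal (f a) := by
  by_cases hs : Summable f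
  · exact (ENNReal.ofReal_tsum_of_nonneg hf hs).le
  · simp [tsum_eq_zero_of_not_summable hs]

lemma besselI_two_mul (n : ℕ) (x : ℝ) :
    besselI n (2 * x) = ∑' m : ℕ, x ^ m / m ! * (x ^ (m + n) / (m + n)!) := by
  unfold besselI
  congr 1 with m
  rw [mul_div_cancel_left₀ x two_ne_zero, div_mul_div_comm, ← pow_add]
  ring_nf

section

variable {x : ℝ}

lemma pow_add_div_factorial_le (hx : 0 ≤ x) (a b : ℕ) :
    x ^ (a + b) / (a + b)! ≤ x ^ a / a ! * (x ^ b / b !) := by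
  have hfact : (a ! : ℝ) * b ! ≤ (a + b)! := by
    exact_mod_cast Nat.le_of_dvd (a + b).factorial_pos
      (Nat.factorial_mul_factorial_dvd_factorial_add a b)
  rw [div_mul_div_comm, ← pow_add]
  gcongr

lemma ENNReal.tsum_ofReal_pow_div_factorial (hx : 0 ≤ x) :
    ∑' n : ℕ, ENNReal.ofReal (x ^ n / n !) = ENNReal.ofReal (exp x) := by
  rw [← ENNReal.ofReal_tsum_of_nonneg (fun n => by positivity)
    (Real.summable_pow_div_factorial x), Real.exp_eq_exp_ℝ,
    (NormedSpace.expSeries_div_hasSum_exp x).tsum_eq]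

lemma ENNReal.tsum_ofReal_pow_div_factorial_tail_le (hx : 0 ≤ x) (K : ℕ) :
    ∑' j : ℕ, ENNReal.ofReal (x ^ (K + j) / (K + j)!)
      ≤ ENNReal.ofReal (x ^ K / K !) * ENNReal.ofReal (exp x) := by
  calc ∑' j : ℕ, ENNReal.ofReal (x ^ (K + j) / (K + j)!)
      ≤ ∑' j : ℕ, ENNReal.ofReal (x ^ K / K !) * ENNReal.ofReal (x ^ j / j !) :=
        ENNReal.tsum_le_tsum fun j => by
          rw [← ENNReal.ofReal_mul (by positivity)]
          exact ENNReal.ofReal_le_ofReal (pow_add_div_factorial_le hx K j)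
    _ = ENNReal.ofReal (x ^ K / K !) * ENNReal.ofReal (exp x) := by
        rw [ENNReal.tsum_mul_left, ENNReal.tsum_ofReal_pow_div_factorial hx]

lemma tsum_tsum_ofReal_besselI_terms_le (hx : 0 ≤ x) (K : ℕ) :
    ∑' (j : ℕ) (m : ℕ), ENNReal.ofReal (x ^ m / m ! * (x ^ (m + (K + j)) / (m + (K + j))!))
      ≤ ENNReal.ofReal (exp x) * (ENNReal.ofReal (x ^ K / K !) * ENNReal.ofReal (exp x)) := by
  calc ∑' (j : ℕ) (m : ℕ), ENNReal.ofReal (x ^ m / m ! * (x ^ (m + (K + j)) / (m + (K + j))!))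
      = ∑' m : ℕ, ENNReal.ofReal (x ^ m / m !) *
          ∑' j : ℕ, ENNReal.ofReal (x ^ (K + (m + j)) / (K + (m + j))!) := by
        rw [ENNReal.tsum_comm]
        refine tsum_congr fun m => ?_
        simp_rw [ENNReal.ofReal_mul (by positivity : 0 ≤ x ^ m / (m ! : ℝ)),
          ENNReal.tsum_mul_left, show ∀ j, m + (K + j) = K + (m + j) by intro j; ring]
    _ ≤ ∑' m : ℕ, ENNReal.ofReal (x ^ m / m !) *
          (ENNReal.ofReal (x ^ K / K !) * ENNReal.ofReal (exp x)) := by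
        refine ENNReal.tsum_le_tsum fun m => ?_
        gcongr
        -- the inner sum is a subseries of the tail `∑_{i ≥ K} xⁱ/i!`
        exact (ENNReal.tsum_comp_le_tsum_of_injective (add_right_injective m)
          fun j => ENNReal.ofReal (x ^ (K + j) / (K + j)!)).trans
            (ENNReal.tsum_ofReal_pow_div_factorial_tail_le hx K)
    _ = ENNReal.ofReal (exp x) * (ENNReal.ofReal (x ^ K / K !) * ENNReal.ofReal (exp x)) := by
        rw [ENNReal.tsum_mul_right, ENNReal.tsum_ofReal_pow_div_factorial hx]

lemma tsum_G_natCast_add_le (hx : 0 ≤ x) (K : ℕ) :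
    ∑' j : ℕ, G ((K : ℤ) + j) (2 * x) ≤ x ^ K / K ! := by
  have hG : ∀ j : ℕ, G ((K : ℤ) + j) (2 * x)
      = exp (-(2 * x)) * ∑' m : ℕ, x ^ m / m ! * (x ^ (m + (K + j)) / (m + (K + j))!) := by
    intro j
    rw [G, ← besselI_two_mul, ← Nat.cast_add, Int.natAbs_natCast]
  have hG_nonneg : ∀ j : ℕ, 0 ≤ G ((K : ℤ) + j) (2 * x) := fun j => by
    rw [hG]; exact mul_nonneg (exp_nonneg _) (tsum_nonneg fun m => by positivity)
  rw [← ENNReal.ofReal_le_ofReal_iff (by positivity)]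
  calc ENNReal.ofReal (∑' j : ℕ, G ((K : ℤ) + j) (2 * x))
      ≤ ∑' j : ℕ, ENNReal.ofReal (G ((K : ℤ) + j) (2 * x)) :=
        ENNReal.ofReal_tsum_le_tsum_ofReal hG_nonneg
    _ ≤ ENNReal.ofReal (exp (-(2 * x))) * ∑' (j : ℕ) (m : ℕ),
          ENNReal.ofReal (x ^ m / m ! * (x ^ (m + (K + j)) / (m + (K + j))!)) := by
        rw [← ENNReal.tsum_mul_left]
        refine ENNReal.tsum_le_tsum fun j => ?_
        rw [hG, ENNReal.ofReal_mul (exp_nonneg _)]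
        gcongr
        exact ENNReal.ofReal_tsum_le_tsum_ofReal fun m => by positivity
    _ ≤ ENNReal.ofReal (exp (-(2 * x))) *
          (ENNReal.ofReal (exp x) * (ENNReal.ofReal (x ^ K / K !) * ENNReal.ofReal (exp x))) := by
        gcongr
        exact tsum_tsum_ofReal_besselI_terms_le hx K
    _ = ENNReal.ofReal (x ^ K / K !) := by
        rw [← ENNReal.ofReal_mul (by positivity), ← ENNReal.ofReal_mul (exp_nonneg _),
          ← ENNReal.ofReal_mul (exp_nonneg _)]
        have hexp : exp (-(2 * x)) * exp x * exp x = 1 := by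
          rw [← exp_add, ← exp_add, ← exp_zero]; ring_nf
        congr 1
        linear_combination (x ^ K / K !) * hexp

end

-- Stirling's approximation of `(a / e) ^ t / Γ(t + 1)`
noncomputable def stirlingBound (a t : ℝ) : ℝ := 1 / √(2 * π * t) * (a / t) ^ t

lemma pow_div_factorial_le_stirlingBound {x : ℝ} (hx : 0 ≤ x) {n : ℕ} (hn : n ≠ 0) :
    x ^ n / n ! ≤ stirlingBound (exp 1 * x) n := by
  calc x ^ n / n ! ≤ x ^ n / (√(2 * π * n) * (n / exp 1) ^ n) := by
        gcongr; exact Stirling.le_factorial_stirling n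
    _ = stirlingBound (exp 1 * x) n := by
        rw [stirlingBound, Real.rpow_natCast]
        field_simp
        rw [← mul_pow]
        field_simp

lemma stirlingBound_le_of_le {a c t : ℝ} (ha : 0 < a) (hac : a ≤ c) (hct : c ≤ t) :
    stirlingBound a t ≤ stirlingBound a c := by
  have hc : 0 < c := ha.trans_le hac
  have ht : 0 < t := hc.trans_le hct
  unfold stirlingBound
  refine mul_le_mul (by gcongr) ?_ (by positivity) (by positivity)
  exact (Real.rpow_le_rpow (by positivity) (div_le_div_of_nonneg_left ha.le hc hct) ht.le).trans
      (Real.rpow_le_rpow_of_exponent_ge (by positivity) ((div_le_one hc).mpr hac) hct)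

/-- Tail estimate for the discrete heat kernel when `τ ≤ μ h`. -/
theorem discrete_heat_kernel_tail_bound (μ h τ : ℝ) (hμ : 0 < μ) (hh : 0 < h)
    (hτ : 0 < τ) (hτμ : τ ≤ μ * h) :
    ∑' j : ℕ, G (⌈3*μ/h⌉₊ + j : ℤ) (2*τ/h^2)
      ≤ (1 / Real.sqrt (6 * Real.pi * μ / h)) *
        (Real.exp 1 * τ / (3 * μ * h)) ^ (3*μ/h : ℝ) := by
  have hx : 0 < τ / h ^ 2 := by positivity
  have hex : exp 1 * (τ / h ^ 2) ≤ 3 * μ / h := by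
    rw [show 3 * μ / h = 3 * (μ * h) / h ^ 2 by field_simp, mul_div_assoc]
    gcongr
    exact exp_one_lt_three.le
  calc ∑' j : ℕ, G (⌈3*μ/h⌉₊ + j : ℤ) (2*τ/h^2)
      = ∑' j : ℕ, G (⌈3*μ/h⌉₊ + j : ℤ) (2 * (τ / h ^ 2)) := by rw [mul_div_assoc 2 τ]
    _ ≤ (τ / h ^ 2) ^ ⌈3*μ/h⌉₊ / ⌈3*μ/h⌉₊ ! := tsum_G_natCast_add_le hx.le _
    _ ≤ stirlingBound (exp 1 * (τ / h ^ 2)) ⌈3*μ/h⌉₊ :=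
        pow_div_factorial_le_stirlingBound hx.le (Nat.ceil_pos.mpr (by positivity)).ne'
    _ ≤ stirlingBound (exp 1 * (τ / h ^ 2)) (3 * μ / h) :=
        stirlingBound_le_of_le (by positivity) hex (Nat.le_ceil _)
    _ = _ := by
        rw [stirlingBound, show 2 * π * (3 * μ / h) = 6 * π * μ / h by ring,
          show exp 1 * (τ / h ^ 2) / (3 * μ / h) = exp 1 * τ / (3 * μ * h) by field_simp]
end

section
/- If μκ → 0 then the discrete normal velocity n₀ defined by the inequality Φ(n₀,μ,κ) ≤ 0 < Φ(n₀+1,μ,κ) equals 0; i.e., there is δ > 0 such that whenever 0 < μκ < δ, one has (1/2)∫₀^{√(2/(μκ))} e^{-x²/4} dx > (1/2)∫_{√(2/(μκ))}^∞ e^{-x²/4} dx + Σ_{k=2}^∞ ∫_{√(2k/(μκ))}^∞ e^{-x²/4} dx. -/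
open MeasureTheory Real Set

/-!
For `μκ` small the upper limit `√(2/(μκ))` exceeds `1`, so the left-hand side is at least
`(1/2) ∫₀¹ e^{-x²/4} ≥ 3/8`. On the other side, the Gaussian tail beyond `s` is at most
`6 e^{-s²/8}`, so the `k`-th tail `∫_{√(2k/(μκ))}^∞` is at most `6 rᵏ` with `r = e^{-1/(4μκ)}`;
the right-hand side is then bounded by a geometric series of order `r`, which is small.
-/

lemma integral_Ioi_exp_neg_mul_sq_le {b s : ℝ} (hb : 0 < b) (hs : 0 ≤ s) :
    ∫ x in Ioi s, exp (-b * x ^ 2) ≤ √(π / (b / 2)) * exp (-b * s ^ 2 / 2) := by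
  have hhalf : Integrable fun x : ℝ ↦ exp (-(b / 2) * x ^ 2) :=
    integrable_exp_neg_mul_sq (half_pos hb)
  have hpointwise : ∀ x ∈ Ioi s,
      exp (-b * x ^ 2) ≤ exp (-b * s ^ 2 / 2) * exp (-(b / 2) * x ^ 2) := by
    intro x hx
    rw [← exp_add, exp_le_exp]
    nlinarith [mul_le_mul_of_nonneg_left (pow_le_pow_left₀ hs (le_of_lt hx) 2) hb.le]
  calc ∫ x in Ioi s, exp (-b * x ^ 2)
      ≤ ∫ x in Ioi s, exp (-b * s ^ 2 / 2) * exp (-(b / 2) * x ^ 2) :=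
        setIntegral_mono_on (integrable_exp_neg_mul_sq hb).integrableOn
          (hhalf.integrableOn.const_mul _) measurableSet_Ioi hpointwise
    _ = exp (-b * s ^ 2 / 2) * ∫ x in Ioi s, exp (-(b / 2) * x ^ 2) := integral_const_mul _ _
    _ ≤ exp (-b * s ^ 2 / 2) * ∫ x, exp (-(b / 2) * x ^ 2) :=
        mul_le_mul_of_nonneg_left
          (setIntegral_le_integral hhalf (.of_forall fun x ↦ (exp_pos _).le)) (exp_pos _).le
    _ = √(π / (b / 2)) * exp (-b * s ^ 2 / 2) := by rw [integral_gaussian, mul_comm]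

lemma integral_Ioi_sqrt_exp_neg_sq_div_four_le {c : ℝ} (hc : 0 < c) (k : ℕ) :
    ∫ x in Ioi √(2 * k / c), exp (-x ^ 2 / 4) ≤ 6 * exp (-1 / (4 * c)) ^ k := by
  have hs : √(2 * k / c) ^ 2 = 2 * k / c := sq_sqrt (by positivity)
  have hconst : √(π / (1 / 4 / 2)) ≤ 6 := by
    rw [sqrt_le_left (by norm_num)]
    nlinarith [pi_le_four]
  have htail :=
    integral_Ioi_exp_neg_mul_sq_le (b := 1 / 4) (by norm_num) (sqrt_nonneg (2 * k / c))
  rw [hs, show -(1 / 4) * (2 * k / c) / 2 = k * (-1 / (4 * c)) by field_simp,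
    exp_nat_mul] at htail
  calc ∫ x in Ioi √(2 * k / c), exp (-x ^ 2 / 4)
      = ∫ x in Ioi √(2 * k / c), exp (-(1 / 4) * x ^ 2) := by ring_nf
    _ ≤ _ := htail
    _ ≤ 6 * exp (-1 / (4 * c)) ^ k := by gcongr

lemma three_quarters_le_integral_exp_neg_sq_div_four {t : ℝ} (ht : 1 ≤ t) :
    3 / 4 ≤ ∫ x in (0 : ℝ)..t, exp (-x ^ 2 / 4) := by
  have hint : ∀ a b : ℝ, IntervalIntegrable (fun x : ℝ ↦ exp (-x ^ 2 / 4)) volume a b :=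
    fun a b ↦ (by fun_prop : Continuous fun x : ℝ ↦ exp (-x ^ 2 / 4)).intervalIntegrable a b
  -- `e^{-x²/4} ≥ 1 - x²/4 ≥ 3/4` on `[0, 1]`
  have hunit : ∫ _ in (0 : ℝ)..1, (3 / 4 : ℝ) ≤ ∫ x in (0 : ℝ)..1, exp (-x ^ 2 / 4) := by
    refine intervalIntegral.integral_mono_on zero_le_one intervalIntegrable_const (hint 0 1) ?_
    rintro x ⟨hx0, hx1⟩
    nlinarith [add_one_le_exp (-x ^ 2 / 4)]
  have hrest : 0 ≤ ∫ x in (1 : ℝ)..t, exp (-x ^ 2 / 4) :=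
    intervalIntegral.integral_nonneg ht fun x _ ↦ (exp_pos _).le
  rw [← intervalIntegral.integral_add_adjacent_intervals (hint 0 1) (hint 1 t)]
  norm_num at hunit
  linarith

lemma tsum_le_of_le_geometric {f : ℕ → ℝ} {C r : ℝ} (hf₀ : ∀ j, 0 ≤ f j)
    (hf : ∀ j, f j ≤ C * r ^ j) (hr₀ : 0 ≤ r) (hr₁ : r < 1) :
    ∑' j, f j ≤ C / (1 - r) := by
  have hgeom : HasSum (fun j ↦ C * r ^ j) (C / (1 - r)) := by
    simpa only [div_eq_mul_inv] using (hasSum_geometric_of_lt_one hr₀ hr₁).mul_left C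
  exact hasSum_le hf (Summable.of_nonneg_of_le hf₀ hf hgeom.summable).hasSum hgeom

/-- Complete pinning in the super-critical regime: for `μκ` small enough the
discrete normal velocity is `0`. -/
theorem pinning_for_small_mu_kappa :
    ∃ δ > (0:ℝ), ∀ μ κ : ℝ, 0 < μ → 0 < κ → μ * κ < δ →
      (1/2) * ∫ x in (0:ℝ)..(Real.sqrt (2/(μ*κ))), Real.exp (-x^2/4)
        > (1/2) * (∫ x in Ioi (Real.sqrt (2/(μ*κ))), Real.exp (-x^2/4))
          + ∑' j : ℕ, ∫ x in Ioi (Real.sqrt (2*(j+2)/(μ*κ))), Real.exp (-x^2/4) := by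
  refine ⟨1 / 40, by norm_num, fun μ κ hμ hκ hδ ↦ ?_⟩
  set c := μ * κ
  have hc : 0 < c := mul_pos hμ hκ
  set r := exp (-1 / (4 * c))
  have hr₀ : 0 ≤ r := (exp_pos _).le
  have hr : r ≤ 1 / 11 := by
    have h10 : 10 ≤ 1 / (4 * c) := by rw [le_div_iff₀ (by positivity)]; linarith
    rw [show r = (exp (1 / (4 * c)))⁻¹ by rw [← exp_neg, ← neg_div],
      inv_le_comm₀ (exp_pos _) (by norm_num)]
    linarith [add_one_le_exp (1 / (4 * c))]
  have hleft : 3 / 4 ≤ ∫ x in (0 : ℝ)..√(2 / c), exp (-x ^ 2 / 4) := by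
    refine three_quarters_le_integral_exp_neg_sq_div_four (one_le_sqrt.2 ?_)
    rw [le_div_iff₀ hc]; linarith
  have hfirst : ∫ x in Ioi √(2 / c), exp (-x ^ 2 / 4) ≤ 6 * r := by
    simpa using integral_Ioi_sqrt_exp_neg_sq_div_four_le hc 1
  have hseries :
      ∑' j : ℕ, ∫ x in Ioi √(2 * (j + 2) / c), exp (-x ^ 2 / 4) ≤ 6 * r ^ 2 / (1 - r) := by
    refine tsum_le_of_le_geometric (fun j ↦ setIntegral_nonneg measurableSet_Ioi
      fun x _ ↦ (exp_pos _).le) (fun j ↦ ?_) hr₀ (by linarith)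
    have htail := integral_Ioi_sqrt_exp_neg_sq_div_four_le hc (j + 2)
    push_cast at htail
    exact htail.trans_eq (by ring)
  have hsmall : 6 * r ^ 2 / (1 - r) ≤ 1 / 15 := by
    rw [div_le_iff₀ (by linarith)]; nlinarith
  linarith
end
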